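/- There exist ε₀ ∈ (0, 1) and C > 0 such that for every ε ∈ (0, ε₀) there exist u₊ ∈ (0, 1/2) and u₋ ∈ (−1/2, 0) with the following properties: both partial derivatives ∂H̄⁰/∂θ and ∂H̄⁰/∂u vanish at (θ, u) = (0, u₊) and at (θ, u) = (0, u₋), and |u₊ − (ε/6)^{1/3}| ≤ C·ε^{2/3} and |u₋ + (ε/6)^{1/3}| ≤ C·ε^{2/3}. (These two hyperbolic equilibria of the averaged co-orbital problem approximate the Lagrange points L₂ and L₁ at the locations (0°, ±(ε/6)^{1/3} + O(ε^{2/3})) stated in the paper.) -/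

import Mathlib

open Real

/-- The reduced averaged Hamiltonian of the 1:1 mean-motion resonance of the
circular-planar restricted three-body problem at zero eccentricity:
`H̄⁰(θ,u) = -(1-ε)/(2(1+u)²) - u + ε(cos θ - ((1+u)⁴ + 1 - 2(1+u)²cos θ)^{-1/2})`. -/
noncomputable def Hbar (ε θ u : ℝ) : ℝ :=
  -(1 - ε) / (2 * (1 + u) ^ 2) - u +
    ε * (cos θ - 1 / Real.sqrt ((1 + u) ^ 4 + 1 - 2 * (1 + u) ^ 2 * cos θ))

/-! At `θ = 0` the distance to the planet is `|(1 + u)² - 1| = |u (2 + u)|`, so `H̄⁰(0, ·)` is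
rational on either side of the collision `u = 0`, with `∂H̄⁰/∂u (0, u)` equal to
`P(ε, sign u, u) / ((1 + u)³ u² (2 + u)²)` for the polynomial `P = coorbitalPoly`.
For `ε = 6 r³` and `σ = ±1`, `σ P(ε, σ, σ x) = 12 (r³ - x³) + O(r⁴)` near `x = r`, so it changes
sign on `[r - 4 r², r + 4 r²]` and the intermediate value theorem gives equilibria `u = ±x`.
`∂H̄⁰/∂θ` vanishes at `θ = 0` because `H̄⁰` is even in `θ`. -/

theorem Function.Even.hasDerivAt_zero {F : Type*} [NormedAddCommGroup F] [NormedSpace ℝ F]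
    {f : ℝ → F} (hf : Function.Even f) (hd : DifferentiableAt ℝ f 0) : HasDerivAt f 0 0 := by
  have := IsAddTorsionFree.of_isTorsionFree ℝ F
  have h := deriv_comp_neg f 0
  rw [show (fun x => f (-x)) = f from funext hf, neg_zero, self_eq_neg] at h
  simpa [h] using hd.hasDerivAt

lemma Hbar_even (ε u : ℝ) : Function.Even (fun θ => Hbar ε θ u) := fun θ => by
  simp only [Hbar, cos_neg]

lemma planet_dist_sq_at_zero (u : ℝ) :
    (1 + u) ^ 4 + 1 - 2 * (1 + u) ^ 2 * cos 0 = (u * (2 + u)) ^ 2 := by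
  rw [cos_zero]; ring

lemma hasDerivAt_Hbar_in_theta (ε : ℝ) {u : ℝ} (hu : -1 < u) (hu0 : u ≠ 0) :
    HasDerivAt (fun θ => Hbar ε θ u) 0 0 := by
  refine (Hbar_even ε u).hasDerivAt_zero ?_
  have hq : 0 < (1 + u) ^ 4 + 1 - 2 * (1 + u) ^ 2 * cos 0 := by
    rw [planet_dist_sq_at_zero]
    exact pow_two_pos_of_ne_zero (mul_ne_zero hu0 (by linarith))
  unfold Hbar
  fun_prop (disch := first | exact hq.ne' | exact (sqrt_pos.2 hq).ne')

lemma Hbar_zero_eq (ε u : ℝ) :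
    Hbar ε 0 u = -(1 - ε) / (2 * (1 + u) ^ 2) - u + ε * (1 - |u * (2 + u)|⁻¹) := by
  rw [Hbar, planet_dist_sq_at_zero, sqrt_sq_eq_abs, cos_zero, one_div]

def coorbitalPoly (ε σ u : ℝ) : ℝ :=
  ((1 - ε) - (1 + u) ^ 3) * (u * (2 + u)) ^ 2 + 2 * σ * ε * (1 + u) ^ 4

lemma hasDerivAt_Hbar_zero_in_u (ε : ℝ) {u : ℝ} (hu : -1 < u) (hu0 : u ≠ 0) :
    HasDerivAt (fun v => Hbar ε 0 v)
      (coorbitalPoly ε (SignType.sign u) u / ((1 + u) ^ 3 * (u * (2 + u)) ^ 2)) u := by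
  have h1u : 0 < 1 + u := by linarith
  have h2u : 2 + u ≠ 0 := by linarith
  have hw : u * (2 + u) ≠ 0 := mul_ne_zero hu0 h2u
  have hsign : (SignType.sign (u * (2 + u)) : ℝ) = SignType.sign u := by
    rw [sign_mul, sign_pos (by linarith : (0 : ℝ) < 2 + u), SignType.coe_mul, SignType.coe_one,
      mul_one]
  have hdist : HasDerivAt (fun v => |v * (2 + v)|) (SignType.sign u * (2 + 2 * u)) u := by
    refine ((hasDerivAt_abs hw).comp u
      ((hasDerivAt_id' u).mul ((hasDerivAt_id' u).const_add 2))).congr_deriv ?_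
    rw [hsign]; ring
  have hden : HasDerivAt (fun v => 2 * (1 + v) ^ 2) (4 * (1 + u)) u := by
    refine ((((hasDerivAt_id' u).const_add 1).pow 2).const_mul 2).congr_deriv ?_
    ring
  have h := (((hasDerivAt_const u (-(1 - ε))).div hden (by positivity)).sub (hasDerivAt_id' u)).add
    (((hdist.inv (abs_ne_zero.2 hw)).const_sub 1).const_mul ε)
  simp only [Hbar_zero_eq]
  refine h.congr_deriv ?_
  rw [coorbitalPoly, sq_abs]
  field_simp
  ring

lemma pow_add_le_pow_mul_pow {r δ : ℝ} (h0 : 0 ≤ r) (h : r ≤ δ) (n k : ℕ) :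
    r ^ (n + k) ≤ r ^ n * δ ^ k := by
  rw [pow_add]
  exact mul_le_mul_of_nonneg_left (pow_le_pow_left₀ h0 h k) (pow_nonneg h0 n)

/-- Each of the four quantities is `r⁴ q(r)` with `q` of degree 10 and `|q(0)| ≥ 120`; bounding
`r ^ (4 + k)` by `r⁴ / 100 ^ k` makes the claim linear in the monomials. -/
lemma coorbitalPoly_sign_change {σ r : ℝ} (hσ : σ = 1 ∨ σ = -1) (hr : 0 < r) (hr' : r < 1 / 100) :
    0 < σ * coorbitalPoly (6 * r ^ 3) σ (σ * (r - 4 * r ^ 2)) ∧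
      σ * coorbitalPoly (6 * r ^ 3) σ (σ * (r + 4 * r ^ 2)) < 0 := by
  have h := pow_add_le_pow_mul_pow hr.le hr'.le 4
  have := pow_pos hr 4
  rcases hσ with rfl | rfl <;> constructor <;> unfold coorbitalPoly <;>
    linarith [h 1, h 2, h 3, h 4, h 5, h 6, h 7, h 8, h 9, h 10, pow_pos hr 5, pow_pos hr 6,
      pow_pos hr 7, pow_pos hr 8, pow_pos hr 9, pow_pos hr 10, pow_pos hr 11, pow_pos hr 12,
      pow_pos hr 13, pow_pos hr 14]

lemma exists_coorbitalPoly_eq_zero {σ r : ℝ} (hσ : σ = 1 ∨ σ = -1) (hr : 0 < r)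
    (hr' : r < 1 / 100) :
    ∃ x ∈ Set.Icc (r - 4 * r ^ 2) (r + 4 * r ^ 2), coorbitalPoly (6 * r ^ 3) σ (σ * x) = 0 := by
  have hσ0 : σ ≠ 0 := by rcases hσ with rfl | rfl <;> norm_num
  obtain ⟨hleft, hright⟩ := coorbitalPoly_sign_change hσ hr hr'
  obtain ⟨x, hx, hx0⟩ := intermediate_value_Icc' (by nlinarith : r - 4 * r ^ 2 ≤ r + 4 * r ^ 2)
    (f := fun x => σ * coorbitalPoly (6 * r ^ 3) σ (σ * x))
    (by unfold coorbitalPoly; fun_prop) ⟨hright.le, hleft.le⟩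
  exact ⟨x, hx, (mul_eq_zero.1 hx0).resolve_left hσ0⟩

lemma exists_equilibrium_near {σ r : ℝ} (hσ : σ = 1 ∨ σ = -1) (hr : 0 < r) (hr' : r < 1 / 100) :
    ∃ x ∈ Set.Icc (r - 4 * r ^ 2) (r + 4 * r ^ 2),
      HasDerivAt (fun θ => Hbar (6 * r ^ 3) θ (σ * x)) 0 0 ∧
      HasDerivAt (fun u => Hbar (6 * r ^ 3) 0 u) 0 (σ * x) := by
  obtain ⟨x, hx, hP⟩ := exists_coorbitalPoly_eq_zero hσ hr hr'
  have hx0 : 0 < x := by nlinarith [hx.1]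
  have hx1 : x < 1 := by nlinarith [hx.2]
  have hsign : (SignType.sign (σ * x) : ℝ) = σ := by
    rcases hσ with rfl | rfl <;> simp [hx0]
  have hu : -1 < σ * x := by rcases hσ with rfl | rfl <;> linarith
  have hu0 : σ * x ≠ 0 := by rcases hσ with rfl | rfl <;> simp [hx0.ne']
  refine ⟨x, hx, hasDerivAt_Hbar_in_theta _ hu hu0, ?_⟩
  have h := hasDerivAt_Hbar_zero_in_u (6 * r ^ 3) hu hu0
  rwa [hsign, hP, zero_div] at h

/-- Approximation of the Lagrange points `L₁` and `L₂` by equilibria of the averaged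
co-orbital problem: for small `ε` there are equilibria `(0, u₊)` and `(0, u₋)` of `H̄⁰`
with `u_± = ±(ε/6)^{1/3} + O(ε^{2/3})`. -/
theorem L1_L2_equilibria_of_averaged :
    ∃ ε₀ ∈ Set.Ioo (0 : ℝ) 1, ∃ C > (0 : ℝ), ∀ ε ∈ Set.Ioo (0 : ℝ) ε₀,
      ∃ up ∈ Set.Ioo (0 : ℝ) (1 / 2), ∃ um ∈ Set.Ioo (-(1 / 2) : ℝ) 0,
        HasDerivAt (fun θ => Hbar ε θ up) 0 0 ∧
        HasDerivAt (fun u => Hbar ε 0 u) 0 up ∧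
        HasDerivAt (fun θ => Hbar ε θ um) 0 0 ∧
        HasDerivAt (fun u => Hbar ε 0 u) 0 um ∧
        |up - (ε / 6) ^ ((1 : ℝ) / 3)| ≤ C * ε ^ ((2 : ℝ) / 3) ∧
        |um + (ε / 6) ^ ((1 : ℝ) / 3)| ≤ C * ε ^ ((2 : ℝ) / 3) := by
  refine ⟨6 / 10 ^ 6, by norm_num, 4, by norm_num, fun ε ⟨hε, hε₀⟩ => ?_⟩
  set r := (ε / 6) ^ ((1 : ℝ) / 3)
  have hr : 0 < r := by positivity
  have hr3 : r ^ 3 = ε / 6 := by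
    rw [← rpow_natCast, ← rpow_mul (by positivity)]; norm_num
  have hr' : r < 1 / 100 := lt_of_pow_lt_pow_left₀ 3 (by norm_num) (by rw [hr3]; linarith)
  have hr2 : r ^ 2 ≤ ε ^ ((2 : ℝ) / 3) := calc
    r ^ 2 ≤ (ε ^ ((1 : ℝ) / 3)) ^ 2 :=
      pow_le_pow_left₀ hr.le (rpow_le_rpow (by positivity) (by linarith) (by norm_num)) 2
    _ = ε ^ ((2 : ℝ) / 3) := by rw [← rpow_natCast, ← rpow_mul hε.le]; norm_num
  have hε6 : ε = 6 * r ^ 3 := by rw [hr3]; ring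
  obtain ⟨xp, hxp, hθp, hup⟩ := exists_equilibrium_near (Or.inl rfl) hr hr'
  obtain ⟨xm, hxm, hθm, hum⟩ := exists_equilibrium_near (Or.inr rfl) hr hr'
  rw [← hε6] at hθp hup hθm hum
  obtain ⟨hxp₁, hxp₂⟩ := hxp
  obtain ⟨hxm₁, hxm₂⟩ := hxm
  refine ⟨1 * xp, ⟨by nlinarith, by nlinarith⟩, -1 * xm, ⟨by nlinarith, by nlinarith⟩,
    hθp, hup, hθm, hum, ?_, ?_⟩ <;>
  · rw [abs_le]; constructor <;> nlinarith
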